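/- Let A be a ∀⁺ type of system F, let A* be a simple type obtained from A by erasing all quantifiers (assuming all bound type variables of A have distinct names), and let t be a β-normal λ-term. If ⊢_F t : A then ⊢_S t : A* in the simply typed system S. -/

import Mathlib

set_option maxHeartbeats 1000000


/-- Untyped λ-terms in de Bruijn representation. -/
inductive Trm : Type
  | var : ℕ → Trm
  | app : Trm → Trm → Trm
  | lam : Trm → Trm
  deriving DecidableEq

namespace Trm

/-- The set of free variables of a term (as de Bruijn indices). -/
def fv : Trm → Set ℕ
  | var n => {n}
  | app u v => fv u ∪ fv v
  | lam u => {n | n + 1 ∈ fv u}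

/-- A term is closed if it has no free variables. -/
def Closed (t : Trm) : Prop := fv t = ∅

/-- λI-terms: abstraction is allowed only on variables occurring free in the body. -/
inductive IsLI : Trm → Prop
  | var (n : ℕ) : IsLI (var n)
  | app {u v : Trm} : IsLI u → IsLI v → IsLI (app u v)
  | lam {u : Trm} : IsLI u → 0 ∈ fv u → IsLI (lam u)

/-- Lifting of free variables ≥ d. -/
def lift (d : ℕ) : Trm → Trm
  | var n => if n < d then var n else var (n + 1)
  | app u v => app (lift d u) (lift d v)
  | lam u => lam (lift (d + 1) u)

def liftTimes (k : ℕ) (t : Trm) : Trm := (lift 0)^[k] t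

/-- Capture-avoiding substitution of the k-th free variable. -/
def subst : Trm → ℕ → Trm → Trm
  | var n, k, v => if n < k then var n else if n = k then liftTimes k v else var (n - 1)
  | app a b, k, v => app (subst a k v) (subst b k v)
  | lam a, k, v => lam (subst a (k + 1) v)

end Trm

/-- One step of β-reduction. -/
inductive Beta : Trm → Trm → Prop
  | beta {u v : Trm} : Beta (.app (.lam u) v) (u.subst 0 v)
  | appL {u u' v : Trm} : Beta u u' → Beta (.app u v) (.app u' v)
  | appR {u v v' : Trm} : Beta v v' → Beta (.app u v) (.app u v')
  | lam {u u' : Trm} : Beta u u' → Beta (.lam u) (.lam u')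

/-- One step of η-reduction: λx (u)x → u when x ∉ Fv(u). -/
inductive Eta : Trm → Trm → Prop
  | eta (u : Trm) : Eta (.lam (.app (u.lift 0) (.var 0))) u
  | appL {u u' v : Trm} : Eta u u' → Eta (.app u v) (.app u' v)
  | appR {u v v' : Trm} : Eta v v' → Eta (.app u v) (.app u v')
  | lam {u u' : Trm} : Eta u u' → Eta (.lam u) (.lam u')

/-- β-reduction (reflexive-transitive closure). -/
def BetaStar : Trm → Trm → Prop := Relation.ReflTransGen Beta

/-- βη-reduction (reflexive-transitive closure of the union of β and η). -/
def BetaEtaStar : Trm → Trm → Prop := Relation.ReflTransGen (fun a b => Beta a b ∨ Eta a b)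

/-- η-reduction (reflexive-transitive closure). -/
def EtaStar : Trm → Trm → Prop := Relation.ReflTransGen Eta

/-- A term is β-normal iff it contains no β-redex. -/
def BetaNormal (t : Trm) : Prop := ∀ u, ¬ Beta t u

/-- A term is βη-normal iff it contains neither a β-redex nor an η-redex. -/
def BetaEtaNormal (t : Trm) : Prop := ∀ u, ¬ Beta t u ∧ ¬ Eta t u

/-- A term is strongly normalizable iff every β-reduction sequence from it is finite. -/
def StronglyNormalizable (t : Trm) : Prop :=
  ¬ ∃ f : ℕ → Trm, f 0 = t ∧ ∀ n, Beta (f n) (f (n + 1))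

/-- Types of system F in de Bruijn representation. -/
inductive Ty : Type
  | var : ℕ → Ty
  | arr : Ty → Ty → Ty
  | all : Ty → Ty
  deriving DecidableEq

namespace Ty

/-- Free type variables. -/
def tfv : Ty → Set ℕ
  | var n => {n}
  | arr A B => tfv A ∪ tfv B
  | all A => {n | n + 1 ∈ tfv A}

/-- Lifting of free type variables ≥ d. -/
def tlift (d : ℕ) : Ty → Ty
  | var n => if n < d then var n else var (n + 1)
  | arr A B => arr (tlift d A) (tlift d B)
  | all A => all (tlift (d + 1) A)

def tliftTimes (k : ℕ) (A : Ty) : Ty := (tlift 0)^[k] A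

/-- Substitution of the k-th free type variable. -/
def tsubst : Ty → ℕ → Ty → Ty
  | var n, k, G => if n < k then var n else if n = k then tliftTimes k G else var (n - 1)
  | arr A B, k, G => arr (tsubst A k G) (tsubst B k G)
  | all A, k, G => all (tsubst A (k + 1) G)

/-- Proper types: in every subtype ∀X E, the variable X occurs free in E. -/
def Proper : Ty → Prop
  | var _ => True
  | arr A B => Proper A ∧ Proper B
  | all A => Proper A ∧ 0 ∈ tfv A

/-- Closed types. -/
def ClosedTy (A : Ty) : Prop := tfv A = ∅

end Ty

/-- Typing judgments of system F (restricted to proper types: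
the rule (∀e) requires X free in A and instantiates at proper types only). -/
inductive Typing : List Ty → Trm → Ty → Prop
  | ax {Γ : List Ty} {n : ℕ} {A : Ty} :
      Γ[n]? = some A → (∀ B ∈ Γ, B.Proper) → Typing Γ (.var n) A
  | arrI {Γ : List Ty} {A B : Ty} {t : Trm} :
      A.Proper → Typing (A :: Γ) t B → Typing Γ (.lam t) (.arr A B)
  | arrE {Γ : List Ty} {A B : Ty} {u v : Trm} :
      Typing Γ u (.arr A B) → Typing Γ v A → Typing Γ (.app u v) B
  | allI {Γ : List Ty} {A : Ty} {t : Trm} :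
      0 ∈ Ty.tfv A → Typing (Γ.map (Ty.tlift 0)) t A → Typing Γ t (.all A)
  | allE {Γ : List Ty} {A : Ty} {t : Trm} (G : Ty) :
      G.Proper → 0 ∈ Ty.tfv A → Typing Γ t (.all A) → Typing Γ t (A.tsubst 0 G)

mutual
  /-- ∀-positive types: every second-order quantifier occurs positively. -/
  inductive PosT : Ty → Prop
    | var (n : ℕ) : PosT (.var n)
    | arr {A B : Ty} : NegT A → PosT B → PosT (.arr A B)
    | all {A : Ty} : PosT A → 0 ∈ Ty.tfv A → PosT (.all A)
  /-- ∀-negative types. -/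
  inductive NegT : Ty → Prop
    | var (n : ℕ) : NegT (.var n)
    | arr {A B : Ty} : PosT A → NegT B → NegT (.arr A B)
end

/-- Simple types (system S). -/
inductive STy : Type
  | var : ℕ → STy
  | arr : STy → STy → STy
  deriving DecidableEq

/-- Typing judgments of the simple system S: rules (ax), (→i), (→e) only. -/
inductive STyping : List STy → Trm → STy → Prop
  | ax {Γ : List STy} {n : ℕ} {A : STy} : Γ[n]? = some A → STyping Γ (.var n) A
  | arrI {Γ : List STy} {A B : STy} {t : Trm} :
      STyping (A :: Γ) t B → STyping Γ (.lam t) (.arr A B)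
  | arrE {Γ : List STy} {A B : STy} {u v : Trm} :
      STyping Γ u (.arr A B) → STyping Γ v A → STyping Γ (.app u v) B

/-- Erasing all quantifiers of a system F type, giving pairwise distinct fresh names
(odd numbers, numbered by a counter c) to the bound type variables and the name 2n to
the free type variable n, so that all type variables used get distinct names.
The resulting simple type is the canonical element of 𝒮_A. -/
def eraseAux : (ℕ → ℕ) → ℕ → Ty → STy × ℕ
  | f, c, .var n => (.var (f n), c)
  | f, c, .arr A B =>
      let p := eraseAux f c A
      let q := eraseAux f p.2 B
      (.arr p.1 q.1, q.2)
  | f, c, .all A =>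
      eraseAux (fun k => match k with | 0 => 2 * c + 1 | m + 1 => f m) (c + 1) A

/-- A* : the simple type obtained from A by erasing all quantifiers (with all
type variables distinctly named). -/
def erase (A : Ty) : STy := (eraseAux (fun n => 2 * n) 0 A).1

/-!
A typing derivation of a β-normal term can be brought into normal form: an (∀i) followed by
an (∀e) is removed by substituting the instantiating type into the derivation, and an (→i)
followed by an (→e) cannot occur, as it would type a β-redex. In a normal derivation whose
context consists of ∀⁻ types, every neutral term (a variable applied to arguments) has a ∀⁻
type, because eliminations only strip arrows off ∀⁻ types and a ∀⁻ type is never a ∀; every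
normal term is then only ever checked against ∀⁺ types. Erasing quantifiers with polarity,
choosing a simple type for each bound variable of a ∀⁺ type, turns such a derivation into a
derivation of system S; where a neutral term is used as a normal one its type is both ∀⁺ and
∀⁻, hence quantifier-free, so its two erasures coincide.
-/

namespace Ty

theorem tlift_tlift_of_le {e d : ℕ} (A : Ty) (h : e ≤ d) :
    tlift e (tlift d A) = tlift (d + 1) (tlift e A) := by
  induction A generalizing d e with
  | var n =>
    simp only [tlift]
    split_ifs <;> simp only [tlift] <;> split_ifs <;> first | rfl | omega
  | arr A B ihA ihB => simp only [tlift, ihA h, ihB h]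
  | all A ih => simp only [tlift, ih (Nat.succ_le_succ h)]

theorem tliftTimes_succ (G : Ty) (k : ℕ) : tliftTimes (k + 1) G = tlift 0 (tliftTimes k G) :=
  Function.iterate_succ_apply' _ _ _

theorem tlift_tliftTimes_of_le (G : Ty) {d k : ℕ} (h : d ≤ k) :
    tlift d (tliftTimes k G) = tliftTimes (k + 1) G := by
  induction k generalizing d with
  | zero => rw [Nat.le_zero.mp h, ← tliftTimes_succ]
  | succ k ih =>
    cases d with
    | zero => exact (tliftTimes_succ G (k + 1)).symm
    | succ d =>
      rw [tliftTimes_succ, ← tlift_tlift_of_le _ (Nat.zero_le d), ih (by omega), ← tliftTimes_succ]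

theorem tlift_tsubst_of_le (A G : Ty) {d k : ℕ} (h : d ≤ k) :
    tlift d (tsubst A k G) = tsubst (tlift d A) (k + 1) G := by
  induction A generalizing d k with
  | var n =>
    rcases Nat.lt_trichotomy n k with hnk | rfl | hnk
    · by_cases hnd : n < d
      · simp [tsubst, tlift, hnk, hnd, show n < k + 1 by omega]
      · simp [tsubst, tlift, hnk, hnd, show n + 1 < k + 1 by omega]
    · simp [tsubst, tlift, show ¬ n < d by omega, tlift_tliftTimes_of_le G h]
    · simp [tsubst, tlift, show ¬ n < k by omega, show n ≠ k by omega,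
        show ¬ n - 1 < d by omega, show ¬ n < d by omega, show n - 1 + 1 = n by omega]
  | arr A B ihA ihB => simp only [tsubst, tlift, ihA h, ihB h]
  | all A ih => simp only [tsubst, tlift, ih (Nat.succ_le_succ h)]

@[simp]
theorem tsubst_tlift (A G : Ty) (d : ℕ) : tsubst (tlift d A) d G = A := by
  induction A generalizing d with
  | var n =>
    by_cases h : n < d
    · simp [tlift, tsubst, h]
    · simp [tlift, tsubst, h, show ¬ n + 1 < d by omega, show n + 1 ≠ d by omega]
  | arr A B ihA ihB => simp only [tlift, tsubst, ihA, ihB]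
  | all A ih => simp only [tlift, tsubst, ih]

theorem tsubst_tliftTimes_of_le (H G : Ty) {j k : ℕ} (h : j ≤ k) :
    tsubst (tliftTimes j H) k G = tliftTimes j (tsubst H (k - j) G) := by
  induction j generalizing k with
  | zero => rfl
  | succ j ih =>
    obtain ⟨k, rfl⟩ : ∃ k', k = k' + 1 := ⟨k - 1, by omega⟩
    rw [tliftTimes_succ, ← tlift_tsubst_of_le _ _ (Nat.zero_le k), ih (by omega), tliftTimes_succ,
      Nat.add_sub_add_right]

theorem tsubst_tsubst_of_le (A H G : Ty) {j k : ℕ} (h : j ≤ k) :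
    tsubst (tsubst A j H) k G = tsubst (tsubst A (k + 1) G) j (tsubst H (k - j) G) := by
  induction A generalizing j k with
  | var n =>
    rcases Nat.lt_trichotomy n j with hnj | rfl | hnj
    · simp [tsubst, hnj, show n < k by omega, show n < k + 1 by omega]
    · simp [tsubst, show n < k + 1 by omega, tsubst_tliftTimes_of_le H G h]
    · rcases Nat.lt_trichotomy n (k + 1) with hnk | rfl | hnk
      · simp [tsubst, show ¬ n < j by omega, show n ≠ j by omega, hnk, show n - 1 < k by omega]
      · simp [tsubst, show ¬ k + 1 < j by omega, show k + 1 ≠ j by omega,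
          ← tlift_tliftTimes_of_le G h]
      · simp [tsubst, show ¬ n < j by omega, show n ≠ j by omega,
          show ¬ n - 1 < k by omega, show n - 1 ≠ k by omega, show ¬ n < k + 1 by omega,
          show n ≠ k + 1 by omega, show ¬ n - 1 < j by omega, show n - 1 ≠ j by omega]
  | arr A B ihA ihB => simp only [tsubst, ihA h, ihB h]
  | all A ih => simp only [tsubst, ih (j := j + 1) (k := k + 1) (by omega), Nat.add_sub_add_right]

theorem mem_tfv_tlift_of_lt {A : Ty} {m d : ℕ} (h : m < d) (hm : m ∈ tfv A) :
    m ∈ tfv (tlift d A) := by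
  induction A generalizing m d with
  | var n =>
    obtain rfl : m = n := hm
    simp [tlift, h, tfv]
  | arr A B ihA ihB => exact hm.imp (ihA h) (ihB h)
  | all A ih => exact ih (m := m + 1) (Nat.succ_lt_succ h) hm

end Ty

mutual

theorem PosT.tlift {A : Ty} (hA : PosT A) (d : ℕ) : PosT (A.tlift d) :=
  match hA with
  | .var _ => by unfold Ty.tlift; split <;> exact .var _
  | .arr hA hB => .arr (hA.tlift d) (hB.tlift d)
  | .all hA h0 => .all (hA.tlift (d + 1)) (Ty.mem_tfv_tlift_of_lt (Nat.succ_pos d) h0)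

theorem NegT.tlift {A : Ty} (hA : NegT A) (d : ℕ) : NegT (A.tlift d) :=
  match hA with
  | .var _ => by unfold Ty.tlift; split <;> exact .var _
  | .arr hA hB => .arr (hA.tlift d) (hB.tlift d)

end

/-- Quantifier erasure of a type in positive (`true`) or negative (`false`) position. -/
inductive Erases : Bool → Stream' STy → Ty → STy → Prop
  | var {b ρ n} : Erases b ρ (.var n) (ρ n)
  | arr {b ρ A B S T} : Erases (!b) ρ A S → Erases b ρ B T → Erases b ρ (.arr A B) (.arr S T)
  | all {ρ A S} (U : STy) : Erases true (Stream'.cons U ρ) A S → Erases true ρ (.all A) S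

theorem Erases.tlift {b ρ ρ' A S} (h : Erases b ρ A S) {d : ℕ}
    (hρ : ∀ n, ρ' (if n < d then n else n + 1) = ρ n) : Erases b ρ' (A.tlift d) S := by
  induction h generalizing ρ' d with
  | @var b ρ n =>
    rw [← hρ n]
    unfold Ty.tlift
    split <;> exact .var
  | arr _ _ ihA ihB => exact .arr (ihA hρ) (ihB hρ)
  | all U _ ih =>
    refine .all U (ih fun n => ?_)
    cases n with
    | zero => rfl
    | succ n =>
      have hidx :
          (if n + 1 < d + 1 then n + 1 else n + 1 + 1) = (if n < d then n else n + 1) + 1 := by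
        split_ifs <;> omega
      rw [hidx]
      exact hρ n

theorem Erases.unique {ρ A S T} (hP : PosT A) (hN : NegT A) (hS : Erases true ρ A S)
    (hT : Erases false ρ A T) : S = T := by
  induction A generalizing S T with
  | var n => cases hS; cases hT; rfl
  | arr A B ihA ihB =>
    cases hP with | arr hNA hPB =>
    cases hN with | arr hPA hNB =>
    cases hS with | arr hSA hSB =>
    cases hT with | arr hTA hTB =>
    rw [ihA hPA hNA hTA hSA, ihB hPB hNB hSB hTB]
  | all A => cases hN

theorem List.Forall₂.exists_of_getElem? {α β : Type*} {R : α → β → Prop} {l : List α}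
    {l' : List β} (h : List.Forall₂ R l l') {n : ℕ} {a : α} (ha : l[n]? = some a) :
    ∃ b, l'[n]? = some b ∧ R a b := by
  obtain ⟨hn, rfl⟩ := List.getElem?_eq_some_iff.mp ha
  have hn' : n < l'.length := h.length_eq ▸ hn
  exact ⟨l'[n], List.getElem?_eq_getElem hn', by simpa using h.get hn hn'⟩

/-- Normal derivations: `NTyping true` types neutral terms, `NTyping false` normal ones.
The properness side conditions of `Typing` are dropped. -/
inductive NTyping : Bool → List Ty → Trm → Ty → Prop
  | ax {Γ n A} : Γ[n]? = some A → NTyping true Γ (.var n) A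
  | arrE {Γ e u A B} : NTyping true Γ e (.arr A B) → NTyping false Γ u A →
      NTyping true Γ (.app e u) B
  | allE {Γ e A} (G : Ty) : NTyping true Γ e (.all A) → NTyping true Γ e (A.tsubst 0 G)
  | neutral {Γ e A} : NTyping true Γ e A → NTyping false Γ e A
  | arrI {Γ u A B} : NTyping false (A :: Γ) u B → NTyping false Γ (.lam u) (.arr A B)
  | allI {Γ t A} : NTyping false (Γ.map (Ty.tlift 0)) t A → NTyping false Γ t (.all A)

namespace NTyping

theorem tsubst {b Γ t A} (h : NTyping b Γ t A) (k : ℕ) (G : Ty) :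
    NTyping b (Γ.map (·.tsubst k G)) t (A.tsubst k G) := by
  induction h generalizing k with
  | ax hget => exact .ax (by simp [hget])
  | arrE _ _ ihe ihu => exact .arrE (ihe k) (ihu k)
  | allE G₀ _ ih =>
    rw [Ty.tsubst_tsubst_of_le _ _ _ (Nat.zero_le k)]
    exact .allE _ (ih k)
  | neutral _ ih => exact .neutral (ih k)
  | arrI _ ih => exact .arrI (ih k)
  | @allI Γ t A _ ih =>
    have hcomm : (Γ.map (·.tsubst k G)).map (Ty.tlift 0) =
        (Γ.map (Ty.tlift 0)).map (·.tsubst (k + 1) G) := by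
      simp only [List.map_map]
      exact List.map_congr_left fun B _ => Ty.tlift_tsubst_of_le B G (Nat.zero_le k)
    exact .allI (hcomm ▸ ih (k + 1))

theorem instantiate {Γ t A} (h : NTyping false Γ t (.all A)) (G : Ty) :
    NTyping false Γ t (A.tsubst 0 G) := by
  cases h with
  | neutral h => exact .neutral (.allE G h)
  | allI h => simpa [List.map_map, Function.comp_def] using h.tsubst 0 G

theorem neutral_of_arr {Γ u A B} (h : NTyping false Γ u (.arr A B)) (hu : ∀ w, u ≠ .lam w) :
    NTyping true Γ u (.arr A B) := by
  cases h with
  | neutral h => exact h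
  | arrI _ => exact absurd rfl (hu _)

end NTyping

theorem BetaNormal.of_lam {u : Trm} (h : BetaNormal (.lam u)) : BetaNormal u :=
  fun w hw => h (.lam w) (.lam hw)

theorem BetaNormal.of_app_left {u v : Trm} (h : BetaNormal (.app u v)) : BetaNormal u :=
  fun w hw => h (.app w v) (.appL hw)

theorem BetaNormal.of_app_right {u v : Trm} (h : BetaNormal (.app u v)) : BetaNormal v :=
  fun w hw => h (.app u w) (.appR hw)

theorem BetaNormal.app_left_ne_lam {u v : Trm} (h : BetaNormal (.app u v)) (w : Trm) :
    u ≠ .lam w := by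
  rintro rfl
  exact h _ .beta

theorem Typing.toNTyping {Γ t A} (h : Typing Γ t A) (ht : BetaNormal t) : NTyping false Γ t A := by
  induction h with
  | ax hget _ => exact .neutral (.ax hget)
  | arrI _ _ ih => exact .arrI (ih ht.of_lam)
  | arrE _ _ ihu ihv =>
    exact .neutral (.arrE ((ihu ht.of_app_left).neutral_of_arr ht.app_left_ne_lam)
      (ihv ht.of_app_right))
  | allI _ _ ih => exact .allI (ih ht)
  | allE G _ _ _ ih => exact (ih ht).instantiate G

theorem NTyping.sTyping {b Γ t A} (h : NTyping b Γ t A) {ρ : Stream' STy} {Δ : List STy}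
    (hΓ : ∀ B ∈ Γ, NegT B) (hΔ : List.Forall₂ (Erases false ρ) Γ Δ) :
    (b = true → NegT A ∧ ∃ T, Erases false ρ A T ∧ STyping Δ t T) ∧
      (b = false → PosT A → ∀ T, Erases true ρ A T → STyping Δ t T) := by
  induction h generalizing ρ Δ with
  | ax hget =>
    refine ⟨fun _ => ?_, nofun⟩
    obtain ⟨T, hT, hE⟩ := hΔ.exists_of_getElem? hget
    exact ⟨hΓ _ (List.mem_of_getElem? hget), T, hE, .ax hT⟩
  | arrE _ _ ihe ihu =>
    refine ⟨fun _ => ?_, nofun⟩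
    obtain ⟨hN, T, hE, hST⟩ := (ihe hΓ hΔ).1 rfl
    cases hN with | arr hPA hNB =>
    cases hE with | arr hES hET =>
    exact ⟨hNB, _, hET, .arrE hST ((ihu hΓ hΔ).2 rfl hPA _ hES)⟩
  | allE _ _ ih => nomatch ((ih hΓ hΔ).1 rfl).1
  | neutral _ ih =>
    refine ⟨nofun, fun _ hP T hT => ?_⟩
    obtain ⟨hN, T', hT', hST⟩ := (ih hΓ hΔ).1 rfl
    rwa [Erases.unique hP hN hT hT']
  | @arrI Γ _ A _ _ ih =>
    refine ⟨nofun, fun _ hP T hT => ?_⟩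
    cases hP with | arr hNA hPB =>
    cases hT with | arr hES hET =>
    have hΓ' : ∀ B ∈ A :: Γ, NegT B := List.forall_mem_cons.mpr ⟨hNA, hΓ⟩
    exact .arrI ((ih hΓ' (.cons hES hΔ)).2 rfl hPB _ hET)
  | @allI Γ _ _ _ ih =>
    refine ⟨nofun, fun _ hP T hT => ?_⟩
    cases hP with | all hPA _ =>
    cases hT with | all U hT =>
    have hΓ' : ∀ B ∈ Γ.map (Ty.tlift 0), NegT B := by
      simpa using fun B hB => (hΓ B hB).tlift 0
    have hΔ' : List.Forall₂ (Erases false (Stream'.cons U ρ)) (Γ.map (Ty.tlift 0)) Δ :=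
      List.forall₂_map_left_iff.mpr
        (hΔ.imp fun _ _ hE => hE.tlift (ρ' := Stream'.cons U ρ) fun _ => rfl)
    exact (ih hΓ' hΔ').2 rfl hPA T hT

mutual

theorem PosT.erases_eraseAux {A : Ty} (hA : PosT A) (f : ℕ → ℕ) (c : ℕ) :
    Erases true (fun n => .var (f n)) A (eraseAux f c A).1 :=
  match hA with
  | .var _ => .var
  | .arr hA hB => .arr (hA.erases_eraseAux f c) (hB.erases_eraseAux f _)
  | .all hA _ => .all (.var (2 * c + 1)) <| by
      have hρ : Stream'.cons (STy.var (2 * c + 1)) (fun n => STy.var (f n)) =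
          fun n => STy.var (match n with | 0 => 2 * c + 1 | m + 1 => f m) := by
        funext n
        cases n <;> rfl
      rw [hρ]
      exact hA.erases_eraseAux _ (c + 1)

theorem NegT.erases_eraseAux {A : Ty} (hA : NegT A) (f : ℕ → ℕ) (c : ℕ) :
    Erases false (fun n => .var (f n)) A (eraseAux f c A).1 :=
  match hA with
  | .var _ => .var
  | .arr hA hB => .arr (hA.erases_eraseAux f c) (hB.erases_eraseAux f _)

end

/-- if A is a ∀⁺ type of system F and t is β-normal with ⊢_F t : A,
then ⊢_S t : A* in the simple system S. -/
theorem stmt14 (A : Ty) (hA : PosT A) (t : Trm) (hn : BetaNormal t)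
    (h : Typing [] t A) : STyping [] t (erase A) :=
  ((h.toNTyping hn).sTyping (ρ := fun n => .var (2 * n)) (by simp) .nil).2 rfl hA _
    (hA.erases_eraseAux _ 0)
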